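/- Let w ∈ C³ on the union Q of two triangles K¹ (vertices (x_i,y_j), (x_{i+1},y_j), (x_i,y_{j+1})) and K² (vertices (x_i,y_j), (x_{i+1},y_{j−1}), (x_{i+1},y_j)) forming a parallelogram with side lengths hₓ = x_{i+1}−x_i and h_y = y_{j+1}−y_j = y_j − y_{j−1}, and let wᴵ be the piecewise-linear nodal interpolant on these two triangles. Then |∫_Q ∂ₓ(w − wᴵ) dx dy| ≤ C · meas(Q) · Σ_{l+m=2} hₓ^l h_y^m ‖∂ₓ^{l+1}∂_y^m w‖_{L^∞(Q)} for an absolute constant C. -/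

import Mathlib

open MeasureTheory Set

/-!
Let `c = x₀ + hₓ/2` and `κ = ∂_y∂ₓw(c, y₀)`. Split the integrand as
`[∂ₓw(x, y) - ∂ₓw(x, y₀) - (y - y₀) κ] + κ (y - y₀) + [∂ₓw(x, y₀) - (w(x₁, y₀) - w(x₀, y₀)) / hₓ]`.
The two first-order terms integrate to zero over `Q`: the parallelogram is symmetric about its
centre `(c, y₀)`, and all its vertical sections have length `h_y`, so the last term integrates
to `h_y (∫_{x₀}^{x₁} ∂ₓw(x, y₀) dx - (w(x₁, y₀) - w(x₀, y₀))) = 0`. The remainder is bounded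
pointwise by Taylor's formula in `y` and by
`|∂_y∂ₓw(x, y₀) - κ| ≲ hₓ ‖∂_y∂ₓ²w‖ + h_y ‖∂_y²∂ₓw‖`; the latter compares difference quotients of
`∂ₓw` in `y` at `x` and at `c` over the half of `Q` containing `x`, so it needs no symmetry of
mixed partial derivatives.
-/

section OneVariable

variable {f f' f'' : ℝ → ℝ} {a b M : ℝ}

theorem abs_sub_le_mul_of_hasDerivAt (hf : ∀ t, HasDerivAt f (f' t) t)
    (hM : ∀ t ∈ uIcc a b, |f' t| ≤ M) : |f b - f a| ≤ M * |b - a| := by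
  simpa only [Real.norm_eq_abs] using
    (convex_uIcc a b).norm_image_sub_le_of_norm_hasDerivWithin_le
      (fun t _ => (hf t).hasDerivWithinAt) hM left_mem_uIcc right_mem_uIcc

theorem abs_sub_sub_mul_le_of_hasDerivAt (hf : ∀ t, HasDerivAt f (f' t) t)
    (hf' : ∀ t, HasDerivAt f' (f'' t) t) (hM : ∀ t ∈ uIcc a b, |f'' t| ≤ M) :
    |f b - f a - (b - a) * f' a| ≤ M * (b - a) ^ 2 := by
  have hM0 : 0 ≤ M := (abs_nonneg _).trans (hM a left_mem_uIcc)
  have hslope : ∀ t ∈ uIcc a b, |f' t - f' a| ≤ M * |b - a| := fun t ht =>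
    (abs_sub_le_mul_of_hasDerivAt hf' fun s hs => hM s (uIcc_subset_uIcc_left ht hs)).trans
      (mul_le_mul_of_nonneg_left (abs_sub_left_of_mem_uIcc ht) hM0)
  have hg : ∀ t, HasDerivAt (fun t => f t - t * f' a) (f' t - f' a) t := fun t =>
    ((hf t).sub ((hasDerivAt_id' t).mul_const (f' a))).congr_deriv (by ring)
  calc |f b - f a - (b - a) * f' a| = |(f b - b * f' a) - (f a - a * f' a)| := by ring_nf
    _ ≤ M * |b - a| * |b - a| := abs_sub_le_mul_of_hasDerivAt hg hslope
    _ = M * (b - a) ^ 2 := by rw [mul_assoc, ← sq, sq_abs]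

end OneVariable

theorem abs_sub_le_of_mixed_partials {u ux uy uxy uyy : ℝ → ℝ → ℝ} {a b y τ A B : ℝ}
    (hux : ∀ s t, HasDerivAt (u · t) (ux s t) s)
    (huxy : ∀ s t, HasDerivAt (ux s ·) (uxy s t) t)
    (huy : ∀ s t, HasDerivAt (u s ·) (uy s t) t)
    (huyy : ∀ s t, HasDerivAt (uy s ·) (uyy s t) t)
    (hA : ∀ s ∈ uIcc a b, ∀ t ∈ uIcc y (y + τ), |uxy s t| ≤ A)
    (hB : ∀ s ∈ uIcc a b, ∀ t ∈ uIcc y (y + τ), |uyy s t| ≤ B) (hτ : τ ≠ 0) :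
    |uy b y - uy a y| ≤ A * |b - a| + 2 * B * |τ| := by
  have hdiff : |(u b (y + τ) - u b y) - (u a (y + τ) - u a y)| ≤ A * |τ| * |b - a| := by
    refine abs_sub_le_mul_of_hasDerivAt (fun s => (hux s _).sub (hux s _)) fun s hs => ?_
    simpa using abs_sub_le_mul_of_hasDerivAt (huxy s) (hA s hs)
  have htaylor : ∀ s ∈ uIcc a b, |u s (y + τ) - u s y - τ * uy s y| ≤ B * |τ| ^ 2 := by
    intro s hs
    simpa using abs_sub_sub_mul_le_of_hasDerivAt (huy s) (huyy s) (hB s hs)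
  have hb := abs_le.1 (htaylor b right_mem_uIcc)
  have ha := abs_le.1 (htaylor a left_mem_uIcc)
  have hd := abs_le.1 hdiff
  have key : |τ| * |uy b y - uy a y| ≤ |τ| * (A * |b - a| + 2 * B * |τ|) := by
    rw [← abs_mul, mul_sub]
    exact abs_le.2 ⟨by nlinarith, by nlinarith⟩
  exact le_of_mul_le_mul_left key (abs_pos.2 hτ)

section ShearedStrip

def shearedStrip (g : ℝ → ℝ) (a b d : ℝ) : Set (ℝ × ℝ) :=
  {p | p.1 ∈ Icc a b ∧ p.2 ∈ Icc (g p.1) (g p.1 + d)}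

variable {g : ℝ → ℝ}

def shearEquiv (hg : Measurable g) : ℝ × ℝ ≃ᵐ ℝ × ℝ where
  toFun p := (p.1, g p.1 + p.2)
  invFun p := (p.1, p.2 - g p.1)
  left_inv p := by simp
  right_inv p := by simp
  measurable_toFun := measurable_fst.prodMk ((hg.comp measurable_fst).add measurable_snd)
  measurable_invFun := measurable_fst.prodMk (measurable_snd.sub (hg.comp measurable_fst))

theorem measurePreserving_shearEquiv (hg : Measurable g) :
    MeasurePreserving (shearEquiv hg) volume volume := by
  rw [Measure.volume_eq_prod]
  exact (MeasurePreserving.id volume).skew_product (g := fun x s => g x + s)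
    ((hg.comp measurable_fst).add measurable_snd)
    (Filter.Eventually.of_forall fun x => (measurePreserving_add_left volume (g x)).map_eq)

theorem shearEquiv_preimage_shearedStrip (hg : Measurable g) (a b d : ℝ) :
    shearEquiv hg ⁻¹' shearedStrip g a b d = Icc a b ×ˢ Icc 0 d := by
  ext ⟨x, s⟩
  simp [shearEquiv, shearedStrip, and_and_and_comm]

theorem setIntegral_shearedStrip (hg : Measurable g) {F : ℝ × ℝ → ℝ} {a b d : ℝ}
    (hF : IntegrableOn F (shearedStrip g a b d)) (hab : a ≤ b) (hd : 0 ≤ d) :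
    ∫ p in shearedStrip g a b d, F p = ∫ x in a..b, ∫ s in 0..d, F (x, g x + s) := by
  have hmp := measurePreserving_shearEquiv hg
  have hF' : IntegrableOn (fun p => F (shearEquiv hg p)) (Icc a b ×ˢ Icc 0 d)
      (volume.prod volume) := by
    rw [← Measure.volume_eq_prod, ← shearEquiv_preimage_shearedStrip hg]
    exact (hmp.integrableOn_comp_preimage (shearEquiv hg).measurableEmbedding).2 hF
  rw [← hmp.setIntegral_preimage_emb (shearEquiv hg).measurableEmbedding,
    shearEquiv_preimage_shearedStrip, Measure.volume_eq_prod, setIntegral_prod _ hF',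
    intervalIntegral.integral_of_le hab, ← integral_Icc_eq_integral_Ioc]
  refine setIntegral_congr_fun measurableSet_Icc fun x _ => ?_
  rw [intervalIntegral.integral_of_le hd, ← integral_Icc_eq_integral_Ioc]
  rfl

end ShearedStrip

theorem add_smul_add_smul_mem_convexHull {E : Type*} [AddCommGroup E] [Module ℝ E]
    {A B C : E} {a b c : ℝ} (ha : 0 ≤ a) (hb : 0 ≤ b) (hc : 0 ≤ c) (habc : a + b + c = 1) :
    a • A + b • B + c • C ∈ convexHull ℝ {A, B, C} := by
  have := (convex_convexHull ℝ {A, B, C}).sum_mem (t := Finset.univ) (w := ![a, b, c])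
    (z := ![A, B, C]) (by simp [Fin.forall_fin_succ, ha, hb, hc])
    (by simp [Fin.sum_univ_three, habc])
    (fun i _ => subset_convexHull ℝ _ (by fin_cases i <;> simp))
  simpa [Fin.sum_univ_three] using this

section Parallelogram

variable {x₀ y₀ hx hy : ℝ}

def parallelogram (x₀ y₀ hx hy : ℝ) : Set (ℝ × ℝ) :=
  shearedStrip (fun x => y₀ - (x - x₀) * (hy / hx)) x₀ (x₀ + hx) hy

theorem mem_parallelogram_iff (hx0 : 0 < hx) {p : ℝ × ℝ} :
    p ∈ parallelogram x₀ y₀ hx hy ↔ x₀ ≤ p.1 ∧ p.1 ≤ x₀ + hx ∧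
      0 ≤ hx * (p.2 - y₀) + hy * (p.1 - x₀) ∧ hx * (p.2 - y₀) + hy * (p.1 - x₀) ≤ hx * hy := by
  obtain ⟨k, rfl⟩ : ∃ k, hy = hx * k := ⟨hy / hx, by field_simp⟩
  simp only [parallelogram, shearedStrip, mem_ofPred_eq, mem_Icc,
    mul_div_cancel_left₀ _ hx0.ne']
  constructor
  · rintro ⟨⟨h1, h2⟩, h3, h4⟩
    exact ⟨h1, h2, by nlinarith, by nlinarith⟩
  · rintro ⟨h1, h2, h3, h4⟩
    exact ⟨⟨h1, h2⟩, by nlinarith, by nlinarith⟩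

theorem convex_parallelogram (hx0 : 0 < hx) : Convex ℝ (parallelogram x₀ y₀ hx hy) := by
  intro p hp q hq s t hs ht hst
  rw [mem_parallelogram_iff hx0] at hp hq ⊢
  obtain ⟨hp1, hp2, hp3, hp4⟩ := hp
  obtain ⟨hq1, hq2, hq3, hq4⟩ := hq
  obtain rfl : t = 1 - s := by linarith
  simp only [Prod.fst_add, Prod.snd_add, Prod.smul_fst, Prod.smul_snd, smul_eq_mul]
  exact ⟨by nlinarith, by nlinarith, by nlinarith, by nlinarith⟩

theorem convexHull_union_convexHull_eq_parallelogram (hx0 : 0 < hx) (hy0 : 0 < hy) :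
    convexHull ℝ {(x₀, y₀), (x₀ + hx, y₀), (x₀, y₀ + hy)} ∪
      convexHull ℝ {(x₀, y₀), (x₀ + hx, y₀ - hy), (x₀ + hx, y₀)} =
      parallelogram x₀ y₀ hx hy := by
  have hP := convex_parallelogram (x₀ := x₀) (y₀ := y₀) (hy := hy) hx0
  refine Subset.antisymm ?_ fun p hp => ?_
  · refine union_subset (convexHull_min ?_ hP) (convexHull_min ?_ hP) <;>
      simp only [insert_subset_iff, singleton_subset_iff, mem_parallelogram_iff hx0] <;>
      refine ⟨?_, ?_, ?_⟩ <;> refine ⟨?_, ?_, ?_, ?_⟩ <;> nlinarith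
  obtain ⟨h1, h2, h3, h4⟩ := (mem_parallelogram_iff hx0).1 hp
  rcases le_or_gt y₀ p.2 with hp2 | hp2
  · left
    convert add_smul_add_smul_mem_convexHull
      (a := 1 - (p.1 - x₀) / hx - (p.2 - y₀) / hy) (b := (p.1 - x₀) / hx)
      (c := (p.2 - y₀) / hy) ?_ (by positivity) (by positivity) (by ring) using 1
    · ext <;> simp only [Prod.smul_mk, smul_eq_mul, Prod.mk_add_mk] <;> field_simp <;> ring
    · rw [sub_sub, sub_nonneg, div_add_div _ _ hx0.ne' hy0.ne', div_le_one (by positivity)]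
      linarith
  · right
    convert add_smul_add_smul_mem_convexHull
      (a := (x₀ + hx - p.1) / hx) (b := (y₀ - p.2) / hy)
      (c := 1 - (x₀ + hx - p.1) / hx - (y₀ - p.2) / hy)
      (div_nonneg (by linarith) hx0.le) (div_nonneg (by linarith) hy0.le) ?_ (by ring) using 1
    · ext <;> simp only [Prod.smul_mk, smul_eq_mul, Prod.mk_add_mk] <;> field_simp <;> ring
    · rw [sub_sub, sub_nonneg, div_add_div _ _ hx0.ne' hy0.ne', div_le_one (by positivity)]
      linarith

theorem isCompact_parallelogram (hx0 : 0 < hx) (hy0 : 0 < hy) :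
    IsCompact (parallelogram x₀ y₀ hx hy) := by
  rw [← convexHull_union_convexHull_eq_parallelogram hx0 hy0]
  exact ((toFinite _).isCompact_convexHull ℝ).union ((toFinite _).isCompact_convexHull ℝ)

theorem setIntegral_parallelogram (hx0 : 0 < hx) (hy0 : 0 < hy) {F : ℝ × ℝ → ℝ}
    (hF : Continuous F) :
    ∫ p in parallelogram x₀ y₀ hx hy, F p =
      ∫ x in x₀..x₀ + hx, ∫ s in 0..hy, F (x, y₀ - (x - x₀) * (hy / hx) + s) :=
  setIntegral_shearedStrip (by fun_prop)
    (hF.continuousOn.integrableOn_compact (isCompact_parallelogram hx0 hy0)) (by linarith) hy0.le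

theorem setIntegral_parallelogram_snd_sub (hx0 : 0 < hx) (hy0 : 0 < hy) :
    ∫ p in parallelogram x₀ y₀ hx hy, (p.2 - y₀) = 0 := by
  have hinner (x : ℝ) : ∫ s in 0..hy, (y₀ - (x - x₀) * (hy / hx) + s - y₀) =
      hy * (hy / 2 - (x - x₀) * (hy / hx)) := by
    simp only [add_sub_right_comm _ _ y₀, sub_sub_cancel_left]
    rw [intervalIntegral.integral_comp_add_left (fun s => s), integral_id]
    ring
  rw [setIntegral_parallelogram hx0 hy0 (by fun_prop)]
  simp only [hinner]
  rw [intervalIntegral.integral_comp_sub_right (fun x => hy * (hy / 2 - x * (hy / hx))),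
    sub_self, add_sub_cancel_left, intervalIntegral.integral_const_mul,
    intervalIntegral.integral_sub intervalIntegrable_const
      (intervalIntegral.intervalIntegrable_id.mul_const _),
    intervalIntegral.integral_const, intervalIntegral.integral_mul_const, integral_id, smul_eq_mul]
  field_simp
  ring

theorem setIntegral_parallelogram_comp_fst (hx0 : 0 < hx) (hy0 : 0 < hy) {φ : ℝ → ℝ}
    (hφ : Continuous φ) :
    ∫ p in parallelogram x₀ y₀ hx hy, φ p.1 = hy * ∫ x in x₀..x₀ + hx, φ x := by
  rw [setIntegral_parallelogram hx0 hy0 (by fun_prop)]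
  simp [intervalIntegral.integral_const_mul]

theorem setIntegral_parallelogram_sub_secant (hx0 : 0 < hx) (hy0 : 0 < hy) {f f' : ℝ → ℝ}
    (hf : ∀ x, HasDerivAt f (f' x) x) (hf' : Continuous f') :
    ∫ p in parallelogram x₀ y₀ hx hy, (f' p.1 - (f (x₀ + hx) - f x₀) / hx) = 0 := by
  rw [setIntegral_parallelogram_comp_fst hx0 hy0 (φ := fun x => f' x - (f (x₀ + hx) - f x₀) / hx)
      (hf'.sub continuous_const),
    intervalIntegral.integral_sub (hf'.intervalIntegrable _ _) intervalIntegrable_const,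
    intervalIntegral.integral_eq_sub_of_hasDerivAt (fun x _ => hf x) (hf'.intervalIntegrable _ _),
    intervalIntegral.integral_const, smul_eq_mul, add_sub_cancel_left, mul_div_cancel₀ _ hx0.ne',
    sub_self, mul_zero]

theorem setIntegral_parallelogram_sub_secant_eq (hx0 : 0 < hx) (hy0 : 0 < hy)
    {u : ℝ → ℝ → ℝ} {f : ℝ → ℝ} (hu : Continuous fun p : ℝ × ℝ => u p.1 p.2)
    (hf : ∀ x, HasDerivAt f (u x y₀) x) (κ : ℝ) :
    ∫ p in parallelogram x₀ y₀ hx hy, (u p.1 p.2 - (f (x₀ + hx) - f x₀) / hx) =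
      ∫ p in parallelogram x₀ y₀ hx hy, (u p.1 p.2 - u p.1 y₀ - (p.2 - y₀) * κ) := by
  have hu₀ : Continuous (u · y₀) := hu.comp (continuous_id.prodMk continuous_const)
  have hint {F : ℝ × ℝ → ℝ} (hF : Continuous F) : IntegrableOn F (parallelogram x₀ y₀ hx hy) :=
    hF.continuousOn.integrableOn_compact (isCompact_parallelogram hx0 hy0)
  calc ∫ p in parallelogram x₀ y₀ hx hy, (u p.1 p.2 - (f (x₀ + hx) - f x₀) / hx)
      = (∫ p in parallelogram x₀ y₀ hx hy, (u p.1 p.2 - u p.1 y₀ - (p.2 - y₀) * κ)) +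
          κ * (∫ p in parallelogram x₀ y₀ hx hy, (p.2 - y₀)) +
          ∫ p in parallelogram x₀ y₀ hx hy, (u p.1 y₀ - (f (x₀ + hx) - f x₀) / hx) := by
        rw [← integral_const_mul, ← integral_add (hint (by fun_prop)) (hint (by fun_prop)),
          ← integral_add (hint (by fun_prop)) (hint (by fun_prop))]
        congr 1 with p
        ring
    _ = ∫ p in parallelogram x₀ y₀ hx hy, (u p.1 p.2 - u p.1 y₀ - (p.2 - y₀) * κ) := by
        rw [setIntegral_parallelogram_snd_sub hx0 hy0,
          setIntegral_parallelogram_sub_secant hx0 hy0 hf hu₀, mul_zero, add_zero, add_zero]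

theorem mem_parallelogram_of_le_center (hx0 : 0 < hx) (hy0 : 0 < hy) {s t : ℝ}
    (hs : s ∈ Icc x₀ (x₀ + hx / 2)) (ht : t ∈ Icc y₀ (y₀ + hy / 2)) :
    (s, t) ∈ parallelogram x₀ y₀ hx hy := by
  obtain ⟨hs₁, hs₂⟩ := hs
  obtain ⟨ht₁, ht₂⟩ := ht
  rw [mem_parallelogram_iff hx0]
  exact ⟨hs₁, by linarith, by nlinarith, by nlinarith⟩

theorem mem_parallelogram_of_center_le (hx0 : 0 < hx) (hy0 : 0 < hy) {s t : ℝ}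
    (hs : s ∈ Icc (x₀ + hx / 2) (x₀ + hx)) (ht : t ∈ Icc (y₀ - hy / 2) y₀) :
    (s, t) ∈ parallelogram x₀ y₀ hx hy := by
  obtain ⟨hs₁, hs₂⟩ := hs
  obtain ⟨ht₁, ht₂⟩ := ht
  rw [mem_parallelogram_iff hx0]
  exact ⟨by linarith, hs₂, by nlinarith, by nlinarith⟩

variable {u ux uy uxy uyy : ℝ → ℝ → ℝ} {A B : ℝ}

theorem abs_sub_at_center_le_of_mixed_partials (hx0 : 0 < hx) (hy0 : 0 < hy)
    (hux : ∀ s t, HasDerivAt (u · t) (ux s t) s)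
    (huxy : ∀ s t, HasDerivAt (ux s ·) (uxy s t) t)
    (huy : ∀ s t, HasDerivAt (u s ·) (uy s t) t)
    (huyy : ∀ s t, HasDerivAt (uy s ·) (uyy s t) t)
    (hA : ∀ p ∈ parallelogram x₀ y₀ hx hy, |uxy p.1 p.2| ≤ A)
    (hB : ∀ p ∈ parallelogram x₀ y₀ hx hy, |uyy p.1 p.2| ≤ B) {x : ℝ}
    (hxI : x ∈ Icc x₀ (x₀ + hx)) :
    |uy x y₀ - uy (x₀ + hx / 2) y₀| ≤ A * (hx / 2) + B * hy := by
  have hA0 : 0 ≤ A := (abs_nonneg _).trans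
    (hA _ (mem_parallelogram_of_le_center hx0 hy0 ⟨le_rfl, by linarith⟩ ⟨le_rfl, by linarith⟩))
  have hdist : A * |x - (x₀ + hx / 2)| ≤ A * (hx / 2) :=
    mul_le_mul_of_nonneg_left (abs_le.2 ⟨by linarith [hxI.1], by linarith [hxI.2]⟩) hA0
  rcases le_total x (x₀ + hx / 2) with hc | hc
  · have hrect : ∀ s ∈ uIcc (x₀ + hx / 2) x, ∀ t ∈ uIcc y₀ (y₀ + hy / 2),
        (s, t) ∈ parallelogram x₀ y₀ hx hy := fun s hs t ht =>
      mem_parallelogram_of_le_center hx0 hy0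
        (uIcc_subset_Icc ⟨by linarith, le_rfl⟩ ⟨hxI.1, hc⟩ hs)
        (uIcc_subset_Icc ⟨le_rfl, by linarith⟩ ⟨by linarith, le_rfl⟩ ht)
    have := abs_sub_le_of_mixed_partials hux huxy huy huyy
      (fun s hs t ht => hA _ (hrect s hs t ht)) (fun s hs t ht => hB _ (hrect s hs t ht))
      (half_pos hy0).ne'
    rw [abs_of_pos (half_pos hy0)] at this
    linarith
  · have hrect : ∀ s ∈ uIcc (x₀ + hx / 2) x, ∀ t ∈ uIcc y₀ (y₀ + -(hy / 2)),
        (s, t) ∈ parallelogram x₀ y₀ hx hy := fun s hs t ht =>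
      mem_parallelogram_of_center_le hx0 hy0
        (uIcc_subset_Icc ⟨le_rfl, by linarith⟩ ⟨hc, hxI.2⟩ hs)
        (uIcc_subset_Icc ⟨by linarith, le_rfl⟩ ⟨le_rfl, by linarith⟩ ht)
    have := abs_sub_le_of_mixed_partials hux huxy huy huyy
      (fun s hs t ht => hA _ (hrect s hs t ht)) (fun s hs t ht => hB _ (hrect s hs t ht))
      (neg_ne_zero.2 (half_pos hy0).ne')
    rw [abs_neg, abs_of_pos (half_pos hy0)] at this
    linarith

theorem abs_taylor_remainder_le_of_mem_parallelogram (hx0 : 0 < hx) (hy0 : 0 < hy)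
    (hux : ∀ s t, HasDerivAt (u · t) (ux s t) s)
    (huxy : ∀ s t, HasDerivAt (ux s ·) (uxy s t) t)
    (huy : ∀ s t, HasDerivAt (u s ·) (uy s t) t)
    (huyy : ∀ s t, HasDerivAt (uy s ·) (uyy s t) t)
    (hA : ∀ p ∈ parallelogram x₀ y₀ hx hy, |uxy p.1 p.2| ≤ A)
    (hB : ∀ p ∈ parallelogram x₀ y₀ hx hy, |uyy p.1 p.2| ≤ B) {p : ℝ × ℝ}
    (hp : p ∈ parallelogram x₀ y₀ hx hy) :
    |u p.1 p.2 - u p.1 y₀ - (p.2 - y₀) * uy (x₀ + hx / 2) y₀| ≤ 2 * B * hy ^ 2 + A * hx * hy := by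
  obtain ⟨h₁, h₂, h₃, h₄⟩ := (mem_parallelogram_iff hx0).1 hp
  have hcol : ∀ t ∈ uIcc y₀ p.2, (p.1, t) ∈ parallelogram x₀ y₀ hx hy := by
    intro t ht
    rw [mem_parallelogram_iff hx0]
    rcases mem_uIcc.1 ht with ⟨ht₁, ht₂⟩ | ⟨ht₁, ht₂⟩ <;> exact ⟨h₁, h₂, by nlinarith, by nlinarith⟩
  have hdist : |p.2 - y₀| ≤ hy := abs_le.2 ⟨by nlinarith, by nlinarith⟩
  have hA0 : 0 ≤ A := (abs_nonneg _).trans (hA p hp)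
  have hB0 : 0 ≤ B := (abs_nonneg _).trans (hB p hp)
  have htaylor := abs_sub_sub_mul_le_of_hasDerivAt (huy p.1) (huyy p.1) fun t ht => hB _ (hcol t ht)
  have hcenter := abs_sub_at_center_le_of_mixed_partials hx0 hy0 hux huxy huy huyy hA hB ⟨h₁, h₂⟩
  calc |u p.1 p.2 - u p.1 y₀ - (p.2 - y₀) * uy (x₀ + hx / 2) y₀|
      = |(u p.1 p.2 - u p.1 y₀ - (p.2 - y₀) * uy p.1 y₀) +
          (p.2 - y₀) * (uy p.1 y₀ - uy (x₀ + hx / 2) y₀)| := by ring_nf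
    _ ≤ B * (p.2 - y₀) ^ 2 + |p.2 - y₀| * (A * (hx / 2) + B * hy) := by
      refine (abs_add_le _ _).trans (add_le_add htaylor ?_)
      rw [abs_mul]
      gcongr
    _ ≤ B * hy ^ 2 + hy * (A * (hx / 2) + B * hy) :=
      add_le_add (mul_le_mul_of_nonneg_left (sq_le_sq' (abs_le.1 hdist).1 (abs_le.1 hdist).2) hB0)
        (mul_le_mul_of_nonneg_right hdist (by positivity))
    _ ≤ 2 * B * hy ^ 2 + A * hx * hy := by nlinarith [mul_pos hx0 hy0]

end Parallelogram

/-- Lemma 3.1 of the paper (integral inequality for the diffusion term, cancellation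
part): for w ∈ C³ on the parallelogram Q = K¹ ∪ K² (K¹ with vertices
(x₀,y₀), (x₁,y₀), (x₀,y₊); K² with vertices (x₀,y₀), (x₁,y₋), (x₁,y₀)), with the
piecewise-linear nodal interpolant wᴵ (whose x-derivative on Q is the constant
(w(x₁,y₀)−w(x₀,y₀))/hₓ), there is an absolute constant C with
|∫_Q ∂ₓ(w − wᴵ)| ≤ C·meas(Q)·Σ_{l+m=2} hₓ^l h_y^m ‖∂ₓ^{l+1}∂_y^m w‖_{L^∞(Q)}. -/
theorem diffusion_term_integral_inequality :
    ∃ C : ℝ, 0 < C ∧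
      ∀ (x₀ x₁ ym y₀ yp hx hy : ℝ)
        (w wx wxx wxy wxxx wxxy wxyy : ℝ → ℝ → ℝ)
        (M₃₀ M₂₁ M₁₂ : ℝ),
        hx = x₁ - x₀ → 0 < hx →
        hy = yp - y₀ → hy = y₀ - ym → 0 < hy →
        -- w is C³: first, second and third x/y partial derivatives exist and are continuous
        (∀ x y : ℝ, HasDerivAt (fun s => w s y) (wx x y) x) →
        (∀ x y : ℝ, HasDerivAt (fun s => wx s y) (wxx x y) x) →
        (∀ x y : ℝ, HasDerivAt (fun s => wx x s) (wxy x y) y) →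
        (∀ x y : ℝ, HasDerivAt (fun s => wxx s y) (wxxx x y) x) →
        (∀ x y : ℝ, HasDerivAt (fun s => wxx x s) (wxxy x y) y) →
        (∀ x y : ℝ, HasDerivAt (fun s => wxy x s) (wxyy x y) y) →
        Continuous (fun p : ℝ × ℝ => wx p.1 p.2) →
        -- L∞ bounds for the third derivatives on Q
        (∀ p ∈ (convexHull ℝ {((x₀ : ℝ), (y₀ : ℝ)), (x₁, y₀), (x₀, yp)} ∪
                convexHull ℝ {((x₀ : ℝ), (y₀ : ℝ)), (x₁, ym), (x₁, y₀)}),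
            |wxxx p.1 p.2| ≤ M₃₀ ∧ |wxxy p.1 p.2| ≤ M₂₁ ∧ |wxyy p.1 p.2| ≤ M₁₂) →
        |∫ p in (convexHull ℝ {((x₀ : ℝ), (y₀ : ℝ)), (x₁, y₀), (x₀, yp)} ∪
                 convexHull ℝ {((x₀ : ℝ), (y₀ : ℝ)), (x₁, ym), (x₁, y₀)}),
            (wx p.1 p.2 - (w x₁ y₀ - w x₀ y₀) / hx)|
          ≤ C * (volume (convexHull ℝ {((x₀ : ℝ), (y₀ : ℝ)), (x₁, y₀), (x₀, yp)} ∪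
                  convexHull ℝ {((x₀ : ℝ), (y₀ : ℝ)), (x₁, ym), (x₁, y₀)})).toReal
              * (hx ^ 2 * M₃₀ + hx * hy * M₂₁ + hy ^ 2 * M₁₂) := by
  refine ⟨2, two_pos, ?_⟩
  intro x₀ x₁ ym y₀ yp hx hy w wx wxx wxy wxxx wxxy wxyy M₃₀ M₂₁ M₁₂ hhx hx0 hyp hym hy0
    hw hwx_x hwx_y _ hwxx_y hwxy_y hwx hM
  obtain rfl : x₁ = x₀ + hx := by linarith
  obtain rfl : yp = y₀ + hy := by linarith
  obtain rfl : ym = y₀ - hy := by linarith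
  rw [convexHull_union_convexHull_eq_parallelogram hx0 hy0] at hM ⊢
  rw [setIntegral_parallelogram_sub_secant_eq hx0 hy0 hwx (fun x => hw x y₀)
    (wxy (x₀ + hx / 2) y₀), ← Real.norm_eq_abs, ← measureReal_def]
  obtain ⟨h₃₀, h₂₁, -⟩ :=
    hM _ (mem_parallelogram_of_le_center hx0 hy0 ⟨le_rfl, by linarith⟩ ⟨le_rfl, by linarith⟩)
  have hV : 0 ≤ volume.real (parallelogram x₀ y₀ hx hy) := measureReal_nonneg
  calc _ ≤ (2 * M₁₂ * hy ^ 2 + M₂₁ * hx * hy) * volume.real (parallelogram x₀ y₀ hx hy) :=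
        norm_setIntegral_le_of_norm_le_const (isCompact_parallelogram hx0 hy0).measure_lt_top
          fun p hp => abs_taylor_remainder_le_of_mem_parallelogram hx0 hy0 hwx_x hwxx_y hwx_y
            hwxy_y (fun q hq => (hM q hq).2.1) (fun q hq => (hM q hq).2.2) hp
    _ ≤ _ := by
        nlinarith [mul_nonneg hV (mul_nonneg (sq_nonneg hx) ((abs_nonneg _).trans h₃₀)),
          mul_nonneg hV (mul_nonneg (mul_pos hx0 hy0).le ((abs_nonneg _).trans h₂₁))]
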